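/- Let N ≥ 3, 2* := 2N/(N−2), and fix γ_p ∈ (0,2) and γ_q ∈ (2,2*). There exists a constant α₂ > 0, depending only on γ_p, γ_q and N, with the following property: whenever ρ > 0, x, y, z ≥ 0 and D₁, D₂, E > 0 satisfy ρ² = x + y + z, 2ρ² = γ_p x + γ_q y + 2* z, x ≤ γ_p D₁ ρ^{γ_p}, y ≤ γ_q D₂ ρ^{γ_q}, and z ≤ 2* E ρ^{2*}, then D₂ D₁^{(γ_q−2)/(2−γ_p)} + E D₁^{(2*−2)/(2−γ_p)} ≥ α₂. -/
import Mathlib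


open Real

/-- The critical Sobolev exponent `2* = 2N/(N-2)`. -/
noncomputable def twoStar (N : ℕ) : ℝ := 2 * (N : ℝ) / ((N : ℝ) - 2)

theorem stmt_6 (N : ℕ) (hN : 3 ≤ N) (γp γq : ℝ)
    (hγp₀ : 0 < γp) (hγp₂ : γp < 2) (hγq₂ : 2 < γq) (hγq : γq < twoStar N) :
    ∃ α₂ : ℝ, 0 < α₂ ∧
      ∀ ρ x y z D₁ D₂ E : ℝ, 0 < ρ → 0 ≤ x → 0 ≤ y → 0 ≤ z →
        0 < D₁ → 0 < D₂ → 0 < E →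
        ρ ^ 2 = x + y + z →
        2 * ρ ^ 2 = γp * x + γq * y + twoStar N * z →
        x ≤ γp * D₁ * ρ ^ γp →
        y ≤ γq * D₂ * ρ ^ γq →
        z ≤ twoStar N * E * ρ ^ (twoStar N) →
        α₂ ≤ D₂ * D₁ ^ ((γq - 2) / (2 - γp))
          + E * D₁ ^ ((twoStar N - 2) / (2 - γp)) := by
  set s := twoStar N with hs_def
  have hN3 : (3:ℝ) ≤ (N:ℝ) := by exact_mod_cast hN
  have hs2 : 2 < s := by
    rw [hs_def, twoStar, lt_div_iff₀ (by linarith : (0:ℝ) < (N:ℝ) - 2)]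
    linarith
  have hsq : γq < s := hγq
  set K : ℝ := γp * (γq - γp) / (γq - 2) with hK
  have hK0 : 0 < K := by
    apply div_pos (mul_pos hγp₀ (by linarith)) (by linarith)
  set a : ℝ := (γq - 2) / (2 - γp) with ha_def
  set b : ℝ := (s - 2) / (2 - γp) with hb_def
  have ha0 : 0 < a := div_pos (by linarith) (by linarith)
  have hb0 : 0 < b := div_pos (by linarith) (by linarith)
  set M : ℝ := max (γq * K ^ a) (s * K ^ b) with hM_def
  have hKa : 0 < K ^ a := Real.rpow_pos_of_pos hK0 a
  have hKb : 0 < K ^ b := Real.rpow_pos_of_pos hK0 b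
  have hM0 : 0 < M := lt_max_of_lt_left (mul_pos (by linarith) hKa)
  set c : ℝ := (2 - γp) / (s - γp) with hc_def
  have hc0 : 0 < c := div_pos (by linarith) (by linarith)
  refine ⟨c / M, div_pos hc0 hM0, ?_⟩
  intro ρ x y z D₁ D₂ E hρ hx hy hz hD₁ hD₂ hE h1 h2 hxb hyb hzb
  have hρp : 0 < ρ ^ γp := Real.rpow_pos_of_pos hρ γp
  have hρ2 : (0:ℝ) < ρ ^ 2 := by positivity
  -- identity 1 : lower bound for x
  have e1 : (γq - 2) * ρ ^ 2 = (γq - γp) * x + (γq - s) * z := by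
    linear_combination γq * h1 - h2
  have hx_lb : (γq - 2) * ρ ^ 2 ≤ (γq - γp) * x := by
    have h3 : (γq - s) * z ≤ 0 :=
      mul_nonpos_of_nonpos_of_nonneg (by linarith) hz
    linarith
  -- identity 2 : lower bound for y+z
  have e2 : (2 - γp) * ρ ^ 2 = (γq - γp) * y + (s - γp) * z := by
    linear_combination h2 - γp * h1
  have hyz_lb : (2 - γp) * ρ ^ 2 ≤ (s - γp) * (y + z) := by
    have h4 : (γq - γp) * y ≤ (s - γp) * y :=
      mul_le_mul_of_nonneg_right (by linarith) hy
    linarith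
  -- ρ^(2-γp) ≤ K * D₁
  have hmul : ρ ^ ((2:ℝ) - γp) * ρ ^ γp = ρ ^ 2 := by
    rw [← Real.rpow_add hρ, sub_add_cancel,
      show (2:ℝ) = ((2:ℕ):ℝ) by norm_num, Real.rpow_natCast]
  have h4 : (γq - 2) * ρ ^ 2 ≤ (γq - γp) * (γp * D₁ * ρ ^ γp) :=
    hx_lb.trans (mul_le_mul_of_nonneg_left hxb (by linarith))
  have h5 : ((γq - 2) * ρ ^ ((2:ℝ) - γp)) * ρ ^ γp
      ≤ (γp * (γq - γp) * D₁) * ρ ^ γp := by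
    calc ((γq - 2) * ρ ^ ((2:ℝ) - γp)) * ρ ^ γp
        = (γq - 2) * ρ ^ 2 := by rw [mul_assoc, hmul]
      _ ≤ (γq - γp) * (γp * D₁ * ρ ^ γp) := h4
      _ = (γp * (γq - γp) * D₁) * ρ ^ γp := by ring
  have h6 : (γq - 2) * ρ ^ ((2:ℝ) - γp) ≤ γp * (γq - γp) * D₁ :=
    le_of_mul_le_mul_right h5 hρp
  have hA : ρ ^ ((2:ℝ) - γp) ≤ K * D₁ := by
    rw [hK, div_mul_eq_mul_div, le_div_iff₀ (show (0:ℝ) < γq - 2 by linarith)]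
    linarith [h6]
  -- c ≤ γq D₂ ρ^(γq-2) + s E ρ^(s-2)
  have hB : c * ρ ^ 2 ≤ γq * D₂ * ρ ^ γq + s * E * ρ ^ s := by
    have h7 : (s - γp) * (y + z)
        ≤ (s - γp) * (γq * D₂ * ρ ^ γq + s * E * ρ ^ s) := by
      apply mul_le_mul_of_nonneg_left _ (by linarith)
      linarith
    have h8 : (2 - γp) * ρ ^ 2
        ≤ (s - γp) * (γq * D₂ * ρ ^ γq + s * E * ρ ^ s) := le_trans hyz_lb h7
    rw [hc_def, div_mul_eq_mul_div, div_le_iff₀ (show (0:ℝ) < s - γp by linarith)]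
    linarith [h8]
  have hpow2 : ρ ^ 2 = ρ ^ ((2:ℝ)) := by
    rw [show (2:ℝ) = ((2:ℕ):ℝ) by norm_num, Real.rpow_natCast]
  have hsplitq : ρ ^ (γq - 2) * ρ ^ 2 = ρ ^ γq := by
    rw [hpow2, ← Real.rpow_add hρ, sub_add_cancel]
  have hsplits : ρ ^ (s - 2) * ρ ^ 2 = ρ ^ s := by
    rw [hpow2, ← Real.rpow_add hρ, sub_add_cancel]
  have hC : c ≤ γq * D₂ * ρ ^ (γq - 2) + s * E * ρ ^ (s - 2) := by
    have hB' : c * ρ ^ 2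
        ≤ (γq * D₂ * ρ ^ (γq - 2) + s * E * ρ ^ (s - 2)) * ρ ^ 2 := by
      calc c * ρ ^ 2 ≤ γq * D₂ * ρ ^ γq + s * E * ρ ^ s := hB
        _ = (γq * D₂ * ρ ^ (γq - 2) + s * E * ρ ^ (s - 2)) * ρ ^ 2 := by
            rw [← hsplitq, ← hsplits]; ring
    exact le_of_mul_le_mul_right hB' hρ2
  have hne : (2:ℝ) - γp ≠ 0 := by linarith
  have hexp_a : ρ ^ (γq - 2) ≤ K ^ a * D₁ ^ a := by
    have hea : ((2:ℝ) - γp) * a = γq - 2 := by rw [ha_def]; field_simp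
    have h9 : ρ ^ (γq - 2) = (ρ ^ ((2:ℝ) - γp)) ^ a := by
      rw [← Real.rpow_mul hρ.le, hea]
    rw [h9, ← Real.mul_rpow hK0.le hD₁.le]
    exact Real.rpow_le_rpow (Real.rpow_pos_of_pos hρ _).le hA ha0.le
  have hexp_b : ρ ^ (s - 2) ≤ K ^ b * D₁ ^ b := by
    have heb : ((2:ℝ) - γp) * b = s - 2 := by rw [hb_def]; field_simp
    have h9 : ρ ^ (s - 2) = (ρ ^ ((2:ℝ) - γp)) ^ b := by
      rw [← Real.rpow_mul hρ.le, heb]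
    rw [h9, ← Real.mul_rpow hK0.le hD₁.le]
    exact Real.rpow_le_rpow (Real.rpow_pos_of_pos hρ _).le hA hb0.le
  have hD₁a : 0 < D₁ ^ a := Real.rpow_pos_of_pos hD₁ a
  have hD₁b : 0 < D₁ ^ b := Real.rpow_pos_of_pos hD₁ b
  have hfin : c ≤ M * (D₂ * D₁ ^ a + E * D₁ ^ b) := by
    have t1 : γq * D₂ * ρ ^ (γq - 2) ≤ γq * K ^ a * (D₂ * D₁ ^ a) := by
      have := mul_le_mul_of_nonneg_left hexp_a
        (show (0:ℝ) ≤ γq * D₂ by positivity)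
      linarith [this]
    have t2 : s * E * ρ ^ (s - 2) ≤ s * K ^ b * (E * D₁ ^ b) := by
      have := mul_le_mul_of_nonneg_left hexp_b
        (show (0:ℝ) ≤ s * E by positivity)
      linarith [this]
    have m1 : γq * K ^ a ≤ M := le_max_left _ _
    have m2 : s * K ^ b ≤ M := le_max_right _ _
    linarith [mul_le_mul_of_nonneg_right m1
        (show (0:ℝ) ≤ D₂ * D₁ ^ a by positivity),
      mul_le_mul_of_nonneg_right m2
        (show (0:ℝ) ≤ E * D₁ ^ b by positivity), hC, t1, t2]
  rw [div_le_iff₀ hM0]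
  linarith [hfin]
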